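/- Let F : ℝ⁵ → ℝ be smooth, let U ⊆ ℝ⁵ be open, and let g : U → ℝ be a smooth nowhere-vanishing function satisfying X_F(g) = (g/4)·∂₃F on U. Regard X_F as the vector field p = (t, x₀, x₁, x₂, x₃) ↦ (1, x₁, x₂, x₃, F(p)) on ℝ⁵, and let g·∂₃ denote the vector field p ↦ (0, 0, 0, 0, g(p)). Writing ad_{X_F}Y = [X_F, Y] and ad^{i+1}_{X_F}Y = [X_F, ad^i_{X_F}Y], the identity ad⁴_{X_F}(g·∂₃) = −K₀ · (g·∂₃) + K₁ · ad_{X_F}(g·∂₃) − K₂ · ad²_{X_F}(g·∂₃) holds at every point of U. -/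

import Mathlib

/-- Partial derivative in the `i`-th coordinate direction on `ℝⁿ = (Fin n → ℝ)`. -/
noncomputable def pd {n : ℕ} (i : Fin n) (f : (Fin n → ℝ) → ℝ) : (Fin n → ℝ) → ℝ :=
  fun x => fderiv ℝ f x (Pi.single i 1)

namespace Order4

/- Coordinates on `ℝ⁵` are `(t, x₀, x₁, x₂, x₃)`: `∂_t = pd 0`, `∂₀ = pd 1`, `∂₁ = pd 2`,
`∂₂ = pd 3`, `∂₃ = pd 4`, and `x₁ = p 2`, `x₂ = p 3`, `x₃ = p 4`. -/

/-- Total derivative `X_F = ∂_t + x₁·∂₀ + x₂·∂₁ + x₃·∂₂ + F·∂₃` of `x'''' = F`. -/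
noncomputable def XF (F : (Fin 5 → ℝ) → ℝ) (u : (Fin 5 → ℝ) → ℝ) : (Fin 5 → ℝ) → ℝ :=
  fun p => pd 0 u p + p 2 * pd 1 u p + p 3 * pd 2 u p + p 4 * pd 3 u p + F p * pd 4 u p

/-- The curvature `K₀` of a fourth order ODE. -/
noncomputable def K0 (F : (Fin 5 → ℝ) → ℝ) : (Fin 5 → ℝ) → ℝ := fun p =>
  -(pd 1 F p) + XF F (pd 2 F) p - XF F (XF F (pd 3 F)) p
    + (3/4) * XF F (XF F (XF F (pd 4 F))) p
    - (9/16) * (XF F (pd 4 F) p)^2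
    + (9/32) * XF F (pd 4 F) p * (pd 4 F p)^2
    - (3/256) * (pd 4 F p)^4
    - (1/4) * pd 2 F p * pd 4 F p
    + (1/2) * XF F (pd 3 F) p * pd 4 F p
    - (3/4) * XF F (XF F (pd 4 F)) p * pd 4 F p
    + (1/4) * XF F (pd 4 F) p * pd 3 F p
    - (1/16) * pd 3 F p * (pd 4 F p)^2

/-- The curvature `K₁` of a fourth order ODE. -/
noncomputable def K1 (F : (Fin 5 → ℝ) → ℝ) : (Fin 5 → ℝ) → ℝ := fun p =>
  -(pd 2 F p) + 2 * XF F (pd 3 F) p - 2 * XF F (XF F (pd 4 F)) p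
    - (1/2) * pd 3 F p * pd 4 F p
    + (3/2) * XF F (pd 4 F) p * pd 4 F p
    - (1/8) * (pd 4 F p)^3

/-- The curvature `K₂ = −∂₂F + (3/2)X_F(∂₃F) − (3/8)(∂₃F)²` of a fourth order ODE. -/
noncomputable def K2 (F : (Fin 5 → ℝ) → ℝ) : (Fin 5 → ℝ) → ℝ := fun p =>
  -(pd 3 F p) + (3/2) * XF F (pd 4 F) p - (3/8) * (pd 4 F p)^2

/-- The operator `V = ∂₃`. -/
noncomputable def V (u : (Fin 5 → ℝ) → ℝ) : (Fin 5 → ℝ) → ℝ := pd 4 u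

/-- The operator `V' = −∂₂ − (3/4)∂₃F·∂₃`. -/
noncomputable def V' (F : (Fin 5 → ℝ) → ℝ) (u : (Fin 5 → ℝ) → ℝ) : (Fin 5 → ℝ) → ℝ :=
  fun p => -(pd 3 u p) - (3/4) * pd 4 F p * pd 4 u p

end Order4

/-- Lie bracket of vector fields: `[X, Y](x) = DY(x)(X(x)) − DX(x)(Y(x))`. -/
noncomputable def lieBracket {n : ℕ} (X Y : (Fin n → ℝ) → (Fin n → ℝ)) :
    (Fin n → ℝ) → (Fin n → ℝ) :=
  fun x => fderiv ℝ Y x (X x) - fderiv ℝ X x (Y x)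

/-- `X_F` regarded as a vector field on `ℝ⁵`: `p ↦ (1, x₁, x₂, x₃, F(p))`. -/
noncomputable def XFvf (F : (Fin 5 → ℝ) → ℝ) : (Fin 5 → ℝ) → (Fin 5 → ℝ) :=
  fun p => ![1, p 2, p 3, p 4, F p]

namespace Aux
open Order4


lemma contDiff_pd {i : Fin 5} {u : (Fin 5 → ℝ) → ℝ} (hu : ContDiff ℝ (⊤ : ℕ∞) u) :
    ContDiff ℝ (⊤ : ℕ∞) (pd i u) := (hu.fderiv_right (by simp)).clm_apply contDiff_const

lemma contDiff_XF {F u : (Fin 5 → ℝ) → ℝ} (hF : ContDiff ℝ (⊤ : ℕ∞) F) (hu : ContDiff ℝ (⊤ : ℕ∞) u) :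
    ContDiff ℝ (⊤ : ℕ∞) (XF F u) := by
  have h0 : ContDiff ℝ (⊤ : ℕ∞) (pd 0 u) := contDiff_pd hu
  have h1 : ContDiff ℝ (⊤ : ℕ∞) (pd 1 u) := contDiff_pd hu
  have h2 : ContDiff ℝ (⊤ : ℕ∞) (pd 2 u) := contDiff_pd hu
  have h3 : ContDiff ℝ (⊤ : ℕ∞) (pd 3 u) := contDiff_pd hu
  have h4 : ContDiff ℝ (⊤ : ℕ∞) (pd 4 u) := contDiff_pd hu
  unfold XF
  fun_prop

lemma pi_clm_apply (L : (Fin 5 → ℝ) →L[ℝ] ℝ) (w : Fin 5 → ℝ) :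
    L w = w 0 * L (Pi.single 0 1) + w 1 * L (Pi.single 1 1) + w 2 * L (Pi.single 2 1)
      + w 3 * L (Pi.single 3 1) + w 4 * L (Pi.single 4 1) := by
  have h : w = ∑ i : Fin 5, w i • (Pi.single i (1:ℝ) : Fin 5 → ℝ) := by
    funext j; rw [Finset.sum_apply]; simp [Pi.single_apply]
  conv_lhs => rw [h]
  rw [map_sum, Fin.sum_univ_five]; simp [smul_eq_mul]

lemma fderiv_single {u : (Fin 5 → ℝ) → ℝ} {x : Fin 5 → ℝ} (i : Fin 5) :
    fderiv ℝ u x (Pi.single i 1) = pd i u x := rfl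

lemma fderiv_along_X (F z : (Fin 5 → ℝ) → ℝ) (p : Fin 5 → ℝ) :
    fderiv ℝ z p (XFvf F p) = XF F z p := by
  rw [pi_clm_apply]
  simp [XFvf, XF, pd]

lemma fderiv_XFvf_apply {F : (Fin 5 → ℝ) → ℝ} (hF : ContDiff ℝ (⊤ : ℕ∞) F) (p v : Fin 5 → ℝ) :
    fderiv ℝ (XFvf F) p v = ![0, v 2, v 3, v 4, fderiv ℝ F p v] := by
  have hd : HasFDerivAt (XFvf F)
      (ContinuousLinearMap.pi
        (fun i => (![0, ContinuousLinearMap.proj 2, ContinuousLinearMap.proj 3,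
          ContinuousLinearMap.proj 4, fderiv ℝ F p] : Fin 5 → (Fin 5 → ℝ) →L[ℝ] ℝ) i)) p := by
    rw [hasFDerivAt_pi']
    intro i
    fin_cases i <;>
      simp only [XFvf, ContinuousLinearMap.proj_pi, Matrix.cons_val_zero, Matrix.cons_val_one,
        Matrix.head_cons, Matrix.cons_val_two, Matrix.tail_cons, Matrix.cons_val_three,
        Matrix.cons_val_four, Fin.isValue]
    · exact hasFDerivAt_const _ _
    · exact hasFDerivAt_apply 2 p
    · exact hasFDerivAt_apply 3 p
    · exact hasFDerivAt_apply 4 p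
    · exact (hF.differentiable (by simp) p).hasFDerivAt
  rw [hd.fderiv]
  funext i
  fin_cases i <;> simp [ContinuousLinearMap.pi_apply]

lemma fderiv_pi' {Φ : (Fin 5 → ℝ) → (Fin 5 → ℝ)} {p : Fin 5 → ℝ}
    (h : ∀ i, DifferentiableAt ℝ (fun x => Φ x i) p) :
    fderiv ℝ Φ p = ContinuousLinearMap.pi (fun i => fderiv ℝ (fun x => Φ x i) p) :=
  fderiv_pi h

lemma lieBracket_congr {n : ℕ} {X Y Z : (Fin n → ℝ) → (Fin n → ℝ)} {p : Fin n → ℝ}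
    (h : Y =ᶠ[nhds p] Z) : lieBracket X Y p = lieBracket X Z p := by
  unfold lieBracket
  rw [h.fderiv_eq, h.eq_of_nhds]

lemma fdv_add {a b : (Fin 5 → ℝ) → ℝ} {p v : Fin 5 → ℝ} (ha : DifferentiableAt ℝ a p)
    (hb : DifferentiableAt ℝ b p) :
    fderiv ℝ (fun q => a q + b q) p v = fderiv ℝ a p v + fderiv ℝ b p v := by
  rw [fderiv_fun_add ha hb]; rfl

lemma fdv_sub {a b : (Fin 5 → ℝ) → ℝ} {p v : Fin 5 → ℝ} (ha : DifferentiableAt ℝ a p)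
    (hb : DifferentiableAt ℝ b p) :
    fderiv ℝ (fun q => a q - b q) p v = fderiv ℝ a p v - fderiv ℝ b p v := by
  rw [fderiv_fun_sub ha hb]; rfl

lemma fdv_neg {a : (Fin 5 → ℝ) → ℝ} {p v : Fin 5 → ℝ} :
    fderiv ℝ (fun q => -a q) p v = -fderiv ℝ a p v := by
  rw [fderiv_fun_neg]; rfl

lemma fdv_mul {a b : (Fin 5 → ℝ) → ℝ} {p v : Fin 5 → ℝ} (ha : DifferentiableAt ℝ a p)
    (hb : DifferentiableAt ℝ b p) :
    fderiv ℝ (fun q => a q * b q) p v = a p * fderiv ℝ b p v + b p * fderiv ℝ a p v := by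
  rw [fderiv_fun_mul ha hb]; simp [smul_eq_mul]

lemma fdv_cmul {b : (Fin 5 → ℝ) → ℝ} {p v : Fin 5 → ℝ} (c : ℝ) (hb : DifferentiableAt ℝ b p) :
    fderiv ℝ (fun q => c * b q) p v = c * fderiv ℝ b p v := by
  rw [fderiv_const_mul hb]; simp [smul_eq_mul]

lemma fdv_const {p v : Fin 5 → ℝ} (c : ℝ) :
    fderiv ℝ (fun _ : Fin 5 → ℝ => c) p v = 0 := by
  simp

noncomputable def Z1 (F g : (Fin 5 → ℝ) → ℝ) : (Fin 5 → ℝ) → (Fin 5 → ℝ) := fun q =>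
  ![0, 0, 0, g q * (-1), g q * ((-3/4) * pd 4 F q)]

noncomputable def Z2 (F g : (Fin 5 → ℝ) → ℝ) : (Fin 5 → ℝ) → (Fin 5 → ℝ) := fun q =>
  ![0, 0, g q * 1, g q * ((1/2) * pd 4 F q),
    g q * ((-3/4) * XF F (pd 4 F) q + pd 3 F q + (9/16) * pd 4 F q * pd 4 F q)]

noncomputable def Z3 (F g : (Fin 5 → ℝ) → ℝ) : (Fin 5 → ℝ) → (Fin 5 → ℝ) := fun q =>
  ![0, g q * (-1), g q * ((-1/4) * pd 4 F q),
    g q * ((5/4) * XF F (pd 4 F) q + (-1) * pd 3 F q + (-7/16) * pd 4 F q * pd 4 F q),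
    g q * ((27/16) * XF F (pd 4 F) q * pd 4 F q + (-3/4) * XF F (XF F (pd 4 F)) q
      + XF F (pd 3 F) q + (-1) * pd 2 F q + (-5/4) * pd 3 F q * pd 4 F q
      + (-27/64) * pd 4 F q * pd 4 F q * pd 4 F q)]

noncomputable def Z4 (F g : (Fin 5 → ℝ) → ℝ) : (Fin 5 → ℝ) → (Fin 5 → ℝ) := fun q =>
  ![0, 0,
    g q * ((-3/2) * XF F (pd 4 F) q + pd 3 F q + (3/8) * pd 4 F q * pd 4 F q),
    g q * ((-9/4) * XF F (pd 4 F) q * pd 4 F q + 2 * XF F (XF F (pd 4 F)) q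
      + (-2) * XF F (pd 3 F) q + pd 2 F q + pd 3 F q * pd 4 F q
      + (5/16) * pd 4 F q * pd 4 F q * pd 4 F q),
    g q * ((27/16) * XF F (pd 4 F) q * XF F (pd 4 F) q
      + (-5/2) * XF F (pd 4 F) q * pd 3 F q
      + (-81/32) * XF F (pd 4 F) q * pd 4 F q * pd 4 F q
      + (9/4) * XF F (XF F (pd 4 F)) q * pd 4 F q
      + (-3/4) * XF F (XF F (XF F (pd 4 F))) q
      + (-2) * XF F (pd 3 F) q * pd 4 F q
      + XF F (XF F (pd 3 F)) q
      + (-1) * XF F (pd 2 F) q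
      + pd 1 F q
      + pd 2 F q * pd 4 F q
      + pd 3 F q * pd 3 F q
      + (11/8) * pd 3 F q * pd 4 F q * pd 4 F q
      + (81/256) * pd 4 F q * pd 4 F q * pd 4 F q * pd 4 F q)]

section Steps

variable {F g : (Fin 5 → ℝ) → ℝ} {U : Set (Fin 5 → ℝ)}
variable (hF : ContDiff ℝ (⊤ : ℕ∞) F) (hU : IsOpen U) (hg : ContDiffOn ℝ (⊤ : ℕ∞) g U)
variable (hgeq : ∀ p ∈ U, XF F g p = (g p / 4) * pd 4 F p)

include hF hU hg hgeq in
lemma step1 : ∀ p ∈ U, lieBracket (XFvf F) (fun q => ![0, 0, 0, 0, g q]) p = Z1 F g p := by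
  intro p hp
  have hgd : DifferentiableAt ℝ g p :=
    (hg.differentiableOn (by simp)).differentiableAt (hU.mem_nhds hp)
  have hcomp : ∀ i, DifferentiableAt ℝ
      (fun x => (![0, 0, 0, 0, g x] : Fin 5 → ℝ) i) p := by
    intro i
    fin_cases i <;> simp <;> fun_prop
  have e_g : fderiv ℝ g p (XFvf F p) = g p / 4 * pd 4 F p := by
    rw [fderiv_along_X]; exact hgeq p hp
  unfold lieBracket
  rw [fderiv_pi' hcomp, fderiv_XFvf_apply hF]
  rw [pi_clm_apply (fderiv ℝ F p)]
  funext i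
  fin_cases i <;>
    (simp only [Pi.sub_apply, ContinuousLinearMap.pi_apply]
     simp [Z1, fderiv_single]
     try simp (disch := fun_prop) only [fdv_add, fdv_sub, fdv_neg, fdv_mul, fdv_cmul, fdv_const]
     try simp only [e_g, fderiv_along_X]
     try ring)

include hF hU hg hgeq in
lemma step2 : ∀ p ∈ U, lieBracket (XFvf F) (Z1 F g) p = Z2 F g p := by
  intro p hp
  have hgd : DifferentiableAt ℝ g p :=
    (hg.differentiableOn (by simp)).differentiableAt (hU.mem_nhds hp)
  have hd1 : DifferentiableAt ℝ (pd 1 F) p := ((contDiff_pd hF).differentiable (by simp)) p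
  have hd2 : DifferentiableAt ℝ (pd 2 F) p := ((contDiff_pd hF).differentiable (by simp)) p
  have hd3 : DifferentiableAt ℝ (pd 3 F) p := ((contDiff_pd hF).differentiable (by simp)) p
  have hd4 : DifferentiableAt ℝ (pd 4 F) p := ((contDiff_pd hF).differentiable (by simp)) p
  have hda1 : DifferentiableAt ℝ (XF F (pd 4 F)) p :=
    ((contDiff_XF hF (contDiff_pd hF)).differentiable (by simp)) p
  have hda2 : DifferentiableAt ℝ (XF F (XF F (pd 4 F))) p :=
    ((contDiff_XF hF (contDiff_XF hF (contDiff_pd hF))).differentiable (by simp)) p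
  have hdb1 : DifferentiableAt ℝ (XF F (pd 3 F)) p :=
    ((contDiff_XF hF (contDiff_pd hF)).differentiable (by simp)) p
  have hcomp : ∀ i, DifferentiableAt ℝ (fun x => Z1 F g x i) p := by
    intro i
    fin_cases i <;> simp [Z1] <;> fun_prop
  have e_g : fderiv ℝ g p (XFvf F p) = g p / 4 * pd 4 F p := by
    rw [fderiv_along_X]; exact hgeq p hp
  unfold lieBracket
  rw [fderiv_pi' hcomp, fderiv_XFvf_apply hF]
  rw [pi_clm_apply (fderiv ℝ F p) (Z1 F g p)]
  funext i
  fin_cases i <;>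
    (simp only [Pi.sub_apply, ContinuousLinearMap.pi_apply]
     simp [Z1, Z2, fderiv_single]
     try simp (disch := fun_prop) only [fdv_add, fdv_sub, fdv_neg, fdv_mul, fdv_cmul, fdv_const]
     try simp only [e_g, fderiv_along_X, hgeq p hp]
     try ring)

include hF hU hg hgeq in
lemma step3 : ∀ p ∈ U, lieBracket (XFvf F) (Z2 F g) p = Z3 F g p := by
  intro p hp
  have hgd : DifferentiableAt ℝ g p :=
    (hg.differentiableOn (by simp)).differentiableAt (hU.mem_nhds hp)
  have hd1 : DifferentiableAt ℝ (pd 1 F) p := ((contDiff_pd hF).differentiable (by simp)) p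
  have hd2 : DifferentiableAt ℝ (pd 2 F) p := ((contDiff_pd hF).differentiable (by simp)) p
  have hd3 : DifferentiableAt ℝ (pd 3 F) p := ((contDiff_pd hF).differentiable (by simp)) p
  have hd4 : DifferentiableAt ℝ (pd 4 F) p := ((contDiff_pd hF).differentiable (by simp)) p
  have hda1 : DifferentiableAt ℝ (XF F (pd 4 F)) p :=
    ((contDiff_XF hF (contDiff_pd hF)).differentiable (by simp)) p
  have hda2 : DifferentiableAt ℝ (XF F (XF F (pd 4 F))) p :=
    ((contDiff_XF hF (contDiff_XF hF (contDiff_pd hF))).differentiable (by simp)) p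
  have hdb1 : DifferentiableAt ℝ (XF F (pd 3 F)) p :=
    ((contDiff_XF hF (contDiff_pd hF)).differentiable (by simp)) p
  have hcomp : ∀ i, DifferentiableAt ℝ (fun x => Z2 F g x i) p := by
    intro i
    fin_cases i <;> simp [Z2] <;> fun_prop
  have e_g : fderiv ℝ g p (XFvf F p) = g p / 4 * pd 4 F p := by
    rw [fderiv_along_X]; exact hgeq p hp
  unfold lieBracket
  rw [fderiv_pi' hcomp, fderiv_XFvf_apply hF]
  rw [pi_clm_apply (fderiv ℝ F p) (Z2 F g p)]
  funext i
  fin_cases i <;>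
    (simp only [Pi.sub_apply, ContinuousLinearMap.pi_apply]
     simp [Z2, Z3, fderiv_single]
     try simp (disch := fun_prop) only [fdv_add, fdv_sub, fdv_neg, fdv_mul, fdv_cmul, fdv_const]
     try simp only [e_g, fderiv_along_X, hgeq p hp]
     try ring)

include hF hU hg hgeq in
lemma step4 : ∀ p ∈ U, lieBracket (XFvf F) (Z3 F g) p = Z4 F g p := by
  intro p hp
  have hgd : DifferentiableAt ℝ g p :=
    (hg.differentiableOn (by simp)).differentiableAt (hU.mem_nhds hp)
  have hd1 : DifferentiableAt ℝ (pd 1 F) p := ((contDiff_pd hF).differentiable (by simp)) p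
  have hd2 : DifferentiableAt ℝ (pd 2 F) p := ((contDiff_pd hF).differentiable (by simp)) p
  have hd3 : DifferentiableAt ℝ (pd 3 F) p := ((contDiff_pd hF).differentiable (by simp)) p
  have hd4 : DifferentiableAt ℝ (pd 4 F) p := ((contDiff_pd hF).differentiable (by simp)) p
  have hda1 : DifferentiableAt ℝ (XF F (pd 4 F)) p :=
    ((contDiff_XF hF (contDiff_pd hF)).differentiable (by simp)) p
  have hda2 : DifferentiableAt ℝ (XF F (XF F (pd 4 F))) p :=
    ((contDiff_XF hF (contDiff_XF hF (contDiff_pd hF))).differentiable (by simp)) p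
  have hdb1 : DifferentiableAt ℝ (XF F (pd 3 F)) p :=
    ((contDiff_XF hF (contDiff_pd hF)).differentiable (by simp)) p
  have hcomp : ∀ i, DifferentiableAt ℝ (fun x => Z3 F g x i) p := by
    intro i
    fin_cases i <;> simp [Z3] <;> fun_prop
  have e_g : fderiv ℝ g p (XFvf F p) = g p / 4 * pd 4 F p := by
    rw [fderiv_along_X]; exact hgeq p hp
  unfold lieBracket
  rw [fderiv_pi' hcomp, fderiv_XFvf_apply hF]
  rw [pi_clm_apply (fderiv ℝ F p) (Z3 F g p)]
  funext i
  fin_cases i <;>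
    (simp only [Pi.sub_apply, ContinuousLinearMap.pi_apply]
     simp [Z3, Z4, fderiv_single]
     try simp (disch := fun_prop) only [fdv_add, fdv_sub, fdv_neg, fdv_mul, fdv_cmul, fdv_const]
     try simp only [e_g, fderiv_along_X, hgeq p hp]
     try ring)

end Steps

end Aux

open Aux in
open Order4 in
/-- equation (eq_b) for `k = 3`: for a nowhere-vanishing solution `g`
of `X_F(g) = (g/4)·∂₃F`, the iterated Lie bracket satisfies
`ad⁴_{X_F}(g·∂₃) = −K₀·(g·∂₃) + K₁·ad_{X_F}(g·∂₃) − K₂·ad²_{X_F}(g·∂₃)` on `U`. -/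
theorem bracket_relation_order4 (F : (Fin 5 → ℝ) → ℝ) (hF : ContDiff ℝ (⊤ : ℕ∞) F)
    (U : Set (Fin 5 → ℝ)) (hU : IsOpen U)
    (g : (Fin 5 → ℝ) → ℝ) (hg : ContDiffOn ℝ (⊤ : ℕ∞) g U)
    (hg0 : ∀ p ∈ U, g p ≠ 0)
    (hgeq : ∀ p ∈ U, XF F g p = (g p / 4) * pd 4 F p) :
    ∀ p ∈ U,
      lieBracket (XFvf F) (lieBracket (XFvf F) (lieBracket (XFvf F)
          (lieBracket (XFvf F) (fun q => ![0, 0, 0, 0, g q])))) p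
        = (-(K0 F p)) • (![0, 0, 0, 0, g p] : Fin 5 → ℝ)
          + (K1 F p) • lieBracket (XFvf F) (fun q => ![0, 0, 0, 0, g q]) p
          - (K2 F p) • lieBracket (XFvf F)
              (lieBracket (XFvf F) (fun q => ![0, 0, 0, 0, g q])) p := by
  have h1 := step1 hF hU hg hgeq
  have h2 : ∀ q ∈ U,
      lieBracket (XFvf F) (lieBracket (XFvf F) (fun r => ![0, 0, 0, 0, g r])) q
        = Z2 F g q := fun q hq =>
    (lieBracket_congr (Filter.eventuallyEq_of_mem (hU.mem_nhds hq) (fun r hr => h1 r hr))).trans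
      (step2 hF hU hg hgeq q hq)
  have h3 : ∀ q ∈ U,
      lieBracket (XFvf F) (lieBracket (XFvf F)
        (lieBracket (XFvf F) (fun r => ![0, 0, 0, 0, g r]))) q = Z3 F g q := fun q hq =>
    (lieBracket_congr (Filter.eventuallyEq_of_mem (hU.mem_nhds hq) (fun r hr => h2 r hr))).trans
      (step3 hF hU hg hgeq q hq)
  have h4 : ∀ q ∈ U,
      lieBracket (XFvf F) (lieBracket (XFvf F) (lieBracket (XFvf F)
        (lieBracket (XFvf F) (fun r => ![0, 0, 0, 0, g r])))) q = Z4 F g q := fun q hq =>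
    (lieBracket_congr (Filter.eventuallyEq_of_mem (hU.mem_nhds hq) (fun r hr => h3 r hr))).trans
      (step4 hF hU hg hgeq q hq)
  intro p hp
  rw [h4 p hp, h2 p hp, h1 p hp]
  funext i
  fin_cases i <;>
    (simp [Z1, Z2, Z4, K0, K1, K2]
     try ring)
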